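/- arXiv:1005.4151 — 6 statements merged into one kernel-verified Lean document; each statement's English description precedes it below -/
import Mathlib

section
/- Let P be a poset on [n]. Then the cover set P^cov equals the highest cover set P^cov_h (i.e., P^cov is itself independent) if and only if P decomposes into chains: there is a set partition {λ_1, ..., λ_ℓ} of [n] such that P is the union of the chains C_i = {(a,b) : a, b ∈ λ_i, a < b}. -/
open scoped Classical

abbrev Mat (n : ℕ) (F : Type*) := Matrix (Fin n) (Fin n) F

/-- The set of positions strictly above the diagonal. -/
def PosUpper (n : ℕ) : Set (Fin n × Fin n) := {p | p.1 < p.2}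

/-- A poset on `[n]`: a set of strictly-upper positions closed under composition. -/
def IsPoset {n : ℕ} (P : Set (Fin n × Fin n)) : Prop :=
  P ⊆ PosUpper n ∧ ∀ i j k : Fin n, (i, j) ∈ P → (j, k) ∈ P → (i, k) ∈ P

/-- The normality condition for a pattern poset. -/
def NormalPoset {n : ℕ} (P : Set (Fin n × Fin n)) : Prop :=
  ∀ i j k l : Fin n, i ≤ j → j < k → k ≤ l → (i, l) ∉ P → (j, k) ∉ P

/-- The pattern group `U_P` (as a set of matrices). -/
def UPg {n : ℕ} {F : Type*} [Field F] (P : Set (Fin n × Fin n)) : Set (Mat n F) :=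
  {g | (∀ i, g i i = 1) ∧ ∀ i j : Fin n, i ≠ j → (i, j) ∉ P → g i j = 0}

/-- The algebra `n_P` of strictly upper triangular matrices supported on `P`. -/
def nPa {n : ℕ} {F : Type*} [Field F] (P : Set (Fin n × Fin n)) : Set (Mat n F) :=
  {X | ∀ i j : Fin n, (i, j) ∉ P → X i j = 0}

/-- The support of a matrix. -/
def msupp {n : ℕ} {F : Type*} [Field F] (X : Mat n F) : Set (Fin n × Fin n) :=
  {p | X p.1 p.2 ≠ 0}

/-- `F_q`-labeled set partitions: matrices in `n_P` with at most one nonzero entry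
in each row and each column. -/
def SPa {n : ℕ} {F : Type*} [Field F] (P : Set (Fin n × Fin n)) : Set (Mat n F) :=
  {X | X ∈ nPa P ∧ (∀ i j j' : Fin n, X i j ≠ 0 → X i j' ≠ 0 → j = j') ∧
       (∀ i i' j : Fin n, X i j ≠ 0 → X i' j ≠ 0 → i = i')}

/-- `coadj^L_Q(λ) = {(j,k) ∈ P : ∃ i, (i,k) ∈ supp(λ), (i,j) ∈ Q}`. -/
def coadjL {n : ℕ} {F : Type*} [Field F] (P Q : Set (Fin n × Fin n)) (lam : Mat n F) :
    Set (Fin n × Fin n) :=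
  {p | p ∈ P ∧ ∃ i : Fin n, (i, p.2) ∈ msupp lam ∧ (i, p.1) ∈ Q}

/-- `coadj^R_Q(λ) = {(i,j) ∈ P : ∃ k, (i,k) ∈ supp(λ), (j,k) ∈ Q}`. -/
def coadjR {n : ℕ} {F : Type*} [Field F] (P Q : Set (Fin n × Fin n)) (lam : Mat n F) :
    Set (Fin n × Fin n) :=
  {p | p ∈ P ∧ ∃ k : Fin n, (p.1, k) ∈ msupp lam ∧ (p.2, k) ∈ Q}

/-- `coadj_Q(λ) = coadj^L_Q(λ) ∪ coadj^R_Q(λ)`. -/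
def coadjF {n : ℕ} {F : Type*} [Field F] (P Q : Set (Fin n × Fin n)) (lam : Mat n F) :
    Set (Fin n × Fin n) := coadjL P Q lam ∪ coadjR P Q lam

/-- `coaux_P(λ) = coadj_{[[n]]}(λ) \ coadj_P(λ)`. -/
def coauxF {n : ℕ} {F : Type*} [Field F] (P : Set (Fin n × Fin n)) (lam : Mat n F) :
    Set (Fin n × Fin n) := coadjF P (PosUpper n) lam \ coadjF P P lam

/-- The set of covers of a poset `P`. -/
def covers {n : ℕ} (P : Set (Fin n × Fin n)) : Set (Fin n × Fin n) :=
  {p | p ∈ P ∧ ¬ ∃ j : Fin n, (p.1, j) ∈ P ∧ (j, p.2) ∈ P}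

/-- A set of positions is independent if no two distinct elements share a first
coordinate or a second coordinate. -/
def Indep {n : ℕ} (S : Finset (Fin n × Fin n)) : Prop :=
  ∀ p ∈ S, ∀ q ∈ S, p ≠ q → p.1 ≠ q.1 ∧ p.2 ≠ q.2

/-- The weakly decreasing sequence of lengths `j - i` over `(i,j) ∈ S`, padded with
zeros. -/
noncomputable def lenSeq {n : ℕ} (S : Finset (Fin n × Fin n)) : ℕ → ℕ :=
  fun m => (((S.val.map fun p => (p.2 : ℕ) - (p.1 : ℕ)).sort (· ≤ ·)).reverse.getD m 0)

/-- Lexicographic comparison of integer sequences. -/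
def lexGe (f g : ℕ → ℕ) : Prop :=
  f = g ∨ ∃ m : ℕ, (∀ i < m, f i = g i) ∧ g m < f m

/-- `S` is a highest cover set of the poset `P`. -/
def IsHighestCoverSet {n : ℕ} (P : Set (Fin n × Fin n)) (S : Finset (Fin n × Fin n)) : Prop :=
  ↑S ⊆ covers P ∧ Indep S ∧
    ∀ T : Finset (Fin n × Fin n), ↑T ⊆ covers P → Indep T → lexGe (lenSeq S) (lenSeq T)

/-- `P` decomposes into chains: there is a partition of `[n]` (given by a coloring)
such that `P` consists exactly of the pairs `i < j` lying in a common part. -/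
def DecomposesIntoChains {n : ℕ} (P : Set (Fin n × Fin n)) : Prop :=
  ∃ c : Fin n → Fin n, ∀ i j : Fin n, i < j → ((i, j) ∈ P ↔ c i = c j)

/-- `Q` is a `P`-representative poset. -/
def PRep {n : ℕ} (P Q : Set (Fin n × Fin n)) : Prop :=
  Q ⊆ P ∧ ∀ S : Finset (Fin n × Fin n), IsHighestCoverSet Q S →
    (∀ p ∈ S, ∀ j : Fin n, (p.1, j) ∈ covers Q → (j, p.2) ∉ P) ∧
    (∀ p ∈ S, ∀ j : Fin n, (j, p.2) ∈ covers Q → (p.1, j) ∉ P)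

/-!
Every relation `(i, k)` of `P` can be refined to a cover at either end: the largest `m` with
`i ≤ m < k` in `P` gives a lower cover `(m, k)`. Hence, if no two covers share an endpoint,
induction shows that the elements below (and above) any point form a chain, and labelling each
element by the least element below it decomposes `P` into chains. Conversely, in a union of
chains two covers with a common endpoint would be comparable, so one of them is not a cover.
Finally, an independent `P^cov` is highest since the length sequence is monotone under inclusion.
-/

namespace List

theorem antitone_getD_zero_of_pairwise_ge {l : List ℕ} (hl : l.Pairwise (· ≥ ·)) :
    Antitone (l.getD · 0) := by
  intro m m' hmm'
  rcases hmm'.eq_or_lt with rfl | hlt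
  · exact le_rfl
  by_cases hm' : m' < l.length
  · simp only [getD_eq_getElem _ _ hm', getD_eq_getElem _ _ (hlt.trans hm')]
    exact pairwise_iff_getElem.1 hl _ _ _ _ hlt
  · simp only [getD_eq_default _ _ (not_lt.1 hm'), zero_le]

theorem Sublist.getD_zero_le_of_pairwise_ge {l₁ l₂ : List ℕ} (h : l₁ <+ l₂)
    (hl : l₂.Pairwise (· ≥ ·)) (m : ℕ) : l₁.getD m 0 ≤ l₂.getD m 0 := by
  obtain ⟨f, hf⟩ := sublist_iff_exists_orderEmbedding_getElem?_eq.1 h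
  calc l₁.getD m 0 = l₂.getD (f m) 0 := by simp only [getD_eq_getElem?_getD, hf]
    _ ≤ l₂.getD m 0 := antitone_getD_zero_of_pairwise_ge hl f.strictMono.le_apply

end List

theorem Multiset.sort_sublist_sort_of_le {α : Type*} {s t : Multiset α} (h : s ≤ t)
    (r : α → α → Prop) [DecidableRel r] [IsTrans α r] [Std.Antisymm r] [Std.Total r] :
    List.Sublist (s.sort r) (t.sort r) := by
  refine List.sublist_of_subperm_of_pairwise ?_ (s.pairwise_sort r) (t.pairwise_sort r)
  rwa [← Multiset.coe_le, Multiset.sort_eq, Multiset.sort_eq]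

theorem lenSeq_le_of_subset {n : ℕ} {S T : Finset (Fin n × Fin n)} (h : T ⊆ S) (m : ℕ) :
    lenSeq T m ≤ lenSeq S m := by
  refine (Multiset.sort_sublist_sort_of_le ?_ _).reverse.getD_zero_le_of_pairwise_ge ?_ m
  · exact Multiset.map_le_map (Finset.val_le_iff.2 h)
  · exact List.pairwise_reverse.2 (Multiset.pairwise_sort _ _)

theorem lexGe_of_le {f g : ℕ → ℕ} (h : ∀ m, g m ≤ f m) : lexGe f g := by
  by_cases hfg : f = g
  · exact Or.inl hfg
  have hex : ∃ m, f m ≠ g m := Function.ne_iff.1 hfg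
  exact Or.inr ⟨Nat.find hex, fun i hi => not_not.1 (Nat.find_min hex hi),
    (h _).lt_of_ne fun e => Nat.find_spec hex e.symm⟩

theorem indep_iff_injOn {n : ℕ} {S : Finset (Fin n × Fin n)} :
    Indep S ↔ Set.InjOn Prod.fst (S : Set (Fin n × Fin n)) ∧
      Set.InjOn Prod.snd (S : Set (Fin n × Fin n)) := by
  refine ⟨fun h => ⟨fun p hp q hq hpq => ?_, fun p hp q hq hpq => ?_⟩,
    fun ⟨h₁, h₂⟩ p hp q hq hne => ⟨fun e => hne (h₁ hp hq e), fun e => hne (h₂ hp hq e)⟩⟩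
  · by_contra hne; exact (h p hp q hq hne).1 hpq
  · by_contra hne; exact (h p hp q hq hne).2 hpq

theorem exists_isHighestCoverSet_coe_eq_covers_iff {n : ℕ} (P : Set (Fin n × Fin n)) :
    (∃ S : Finset (Fin n × Fin n), IsHighestCoverSet P S ∧ ↑S = covers P) ↔
      Set.InjOn Prod.fst (covers P) ∧ Set.InjOn Prod.snd (covers P) := by
  constructor
  · rintro ⟨S, hS, hcov⟩
    exact hcov ▸ indep_iff_injOn.1 hS.2.1
  · intro hI
    refine ⟨(covers P).toFinite.toFinset, ⟨by simp, indep_iff_injOn.2 (by simpa using hI), ?_⟩,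
      by simp⟩
    exact fun T hT _ => lexGe_of_le (lenSeq_le_of_subset fun p hp => by simpa using hT hp)

section Poset

variable {n : ℕ} {P : Set (Fin n × Fin n)}

theorem exists_lowerCover_of_mem (hP : IsPoset P) {i k : Fin n} (h : (i, k) ∈ P) :
    ∃ m, (m, k) ∈ covers P ∧ (i = m ∨ (i, m) ∈ P) := by
  set s := Finset.univ.filter fun j => (i = j ∨ (i, j) ∈ P) ∧ (j, k) ∈ P
  have hs : s.Nonempty := ⟨i, by simp [s, h]⟩
  have hm := Finset.mem_filter.1 (s.max'_mem hs)
  refine ⟨s.max' hs, ⟨hm.2.2, fun ⟨t, hmt, htk⟩ => ?_⟩, hm.2.1⟩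
  have hts : t ∈ s := by
    refine Finset.mem_filter.2 ⟨Finset.mem_univ t, Or.inr ?_, htk⟩
    rcases hm.2.1 with hi | hi
    · rwa [hi]
    · exact hP.2 _ _ _ hi hmt
  exact (s.le_max' t hts).not_gt (hP.1 hmt)

theorem exists_upperCover_of_mem (hP : IsPoset P) {i k : Fin n} (h : (i, k) ∈ P) :
    ∃ m, (i, m) ∈ covers P ∧ (m = k ∨ (m, k) ∈ P) := by
  set s := Finset.univ.filter fun j => (i, j) ∈ P ∧ (j = k ∨ (j, k) ∈ P)
  have hs : s.Nonempty := ⟨k, by simp [s, h]⟩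
  have hm := Finset.mem_filter.1 (s.min'_mem hs)
  refine ⟨s.min' hs, ⟨hm.2.1, fun ⟨t, hit, htm⟩ => ?_⟩, hm.2.2⟩
  have hts : t ∈ s := by
    refine Finset.mem_filter.2 ⟨Finset.mem_univ t, hit, Or.inr ?_⟩
    rcases hm.2.2 with hk | hk
    · rwa [← hk]
    · exact hP.2 _ _ _ htm hk
  exact (s.min'_le t hts).not_gt (hP.1 htm)

theorem isChain_lowerSet_of_injOn_snd (hP : IsPoset P) (hI : Set.InjOn Prod.snd (covers P))
    (k : Fin n) : IsChain (fun i j => (i, j) ∈ P) {i | (i, k) ∈ P} := by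
  induction k using WellFoundedLT.induction with
  | ind k ih =>
  intro i hi j hj hij
  obtain ⟨m, hm, him⟩ := exists_lowerCover_of_mem hP hi
  obtain ⟨m', hm', hjm⟩ := exists_lowerCover_of_mem hP hj
  obtain rfl : m = m' := congrArg Prod.fst (hI hm hm' rfl)
  rcases him with rfl | him <;> rcases hjm with rfl | hjm
  · exact absurd rfl hij
  · exact Or.inr hjm
  · exact Or.inl him
  · exact ih m (hP.1 hm.1) him hjm hij

theorem isChain_upperSet_of_injOn_fst (hP : IsPoset P) (hI : Set.InjOn Prod.fst (covers P))
    (m : Fin n) : IsChain (fun i j => (i, j) ∈ P) {j | (m, j) ∈ P} := by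
  induction m using WellFoundedGT.induction with
  | ind m ih =>
  intro i hi j hj hij
  obtain ⟨t, ht, hti⟩ := exists_upperCover_of_mem hP hi
  obtain ⟨t', ht', htj⟩ := exists_upperCover_of_mem hP hj
  obtain rfl : t = t' := congrArg Prod.snd (hI ht ht' rfl)
  rcases hti with rfl | hti <;> rcases htj with rfl | htj
  · exact absurd rfl hij
  · exact Or.inl htj
  · exact Or.inr hti
  · exact ih t (hP.1 ht.1) hti htj hij

theorem injOn_snd_covers_iff_isChain (hP : IsPoset P) :
    Set.InjOn Prod.snd (covers P) ↔
      ∀ k, IsChain (fun i j => (i, j) ∈ P) {i | (i, k) ∈ P} := by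
  refine ⟨isChain_lowerSet_of_injOn_snd hP, fun h => ?_⟩
  rintro ⟨i, k⟩ hi ⟨j, k'⟩ hj (rfl : k = k')
  by_contra hne
  rcases h k hi.1 hj.1 fun e => hne (by rw [e]) with hij | hji
  · exact hi.2 ⟨j, hij, hj.1⟩
  · exact hj.2 ⟨i, hji, hi.1⟩

theorem injOn_fst_covers_iff_isChain (hP : IsPoset P) :
    Set.InjOn Prod.fst (covers P) ↔
      ∀ m, IsChain (fun i j => (i, j) ∈ P) {j | (m, j) ∈ P} := by
  refine ⟨isChain_upperSet_of_injOn_fst hP, fun h => ?_⟩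
  rintro ⟨m, i⟩ hi ⟨m', j⟩ hj (rfl : m = m')
  by_contra hne
  rcases h m hi.1 hj.1 fun e => hne (by rw [e]) with hij | hji
  · exact hj.2 ⟨i, hi.1, hij⟩
  · exact hi.2 ⟨j, hj.1, hji⟩

theorem isChain_colorClass {c : Fin n → Fin n}
    (hc : ∀ i j : Fin n, i < j → ((i, j) ∈ P ↔ c i = c j)) (a : Fin n) :
    IsChain (fun i j => (i, j) ∈ P) {i | c i = a} := by
  intro i hi j hj hij
  rcases hij.lt_or_gt with hlt | hlt
  · exact Or.inl ((hc i j hlt).2 (hi.trans hj.symm))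
  · exact Or.inr ((hc j i hlt).2 (hj.trans hi.symm))

theorem DecomposesIntoChains.isChain_lowerSet (hP : IsPoset P) (hD : DecomposesIntoChains P)
    (k : Fin n) : IsChain (fun i j => (i, j) ∈ P) {i | (i, k) ∈ P} := by
  obtain ⟨c, hc⟩ := hD
  exact (isChain_colorClass hc (c k)).mono fun i hi => (hc i k (hP.1 hi)).1 hi

theorem DecomposesIntoChains.isChain_upperSet (hP : IsPoset P) (hD : DecomposesIntoChains P)
    (m : Fin n) : IsChain (fun i j => (i, j) ∈ P) {j | (m, j) ∈ P} := by
  obtain ⟨c, hc⟩ := hD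
  exact (isChain_colorClass hc (c m)).mono fun j hj => ((hc m j (hP.1 hj)).1 hj).symm

variable (P) in
noncomputable def chainBottom (i : Fin n) : Fin n :=
  (Finset.univ.filter fun j => j = i ∨ (j, i) ∈ P).min' ⟨i, by simp⟩

variable (P) in
theorem chainBottom_eq_or_mem (i : Fin n) : chainBottom P i = i ∨ (chainBottom P i, i) ∈ P :=
  (Finset.mem_filter.1 (Finset.min'_mem (Finset.univ.filter fun j => j = i ∨ (j, i) ∈ P) _)).2

theorem chainBottom_le {i j : Fin n} (h : j = i ∨ (j, i) ∈ P) : chainBottom P i ≤ j :=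
  Finset.min'_le _ _ (Finset.mem_filter.2 ⟨Finset.mem_univ j, h⟩)

theorem chainBottom_eq_or_mem_of_mem (hP : IsPoset P)
    (hlow : ∀ k, IsChain (fun i j => (i, j) ∈ P) {i | (i, k) ∈ P}) {i j : Fin n}
    (h : (j, i) ∈ P) : chainBottom P i = j ∨ (chainBottom P i, j) ∈ P := by
  have hle : chainBottom P i ≤ j := chainBottom_le (Or.inr h)
  rcases chainBottom_eq_or_mem P i with hb | hb
  · exact absurd (hb ▸ hle) (hP.1 h).not_ge
  by_cases hbj : chainBottom P i = j
  · exact Or.inl hbj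
  rcases hlow i hb h hbj with hbj' | hjb
  · exact Or.inr hbj'
  · exact absurd hle (hP.1 hjb).not_ge

theorem decomposesIntoChains_of_isChain (hP : IsPoset P)
    (hlow : ∀ k, IsChain (fun i j => (i, j) ∈ P) {i | (i, k) ∈ P})
    (hup : ∀ m, IsChain (fun i j => (i, j) ∈ P) {j | (m, j) ∈ P}) :
    DecomposesIntoChains P := by
  refine ⟨chainBottom P, fun i j hij => ⟨fun h => le_antisymm ?_ ?_, fun h => ?_⟩⟩
  · exact chainBottom_le (chainBottom_eq_or_mem_of_mem hP hlow h)
  · refine chainBottom_le (Or.inr ?_)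
    rcases chainBottom_eq_or_mem P i with hb | hb
    · rwa [hb]
    · exact hP.2 _ _ _ hb h
  · have hbi : chainBottom P i ≤ i := chainBottom_le (Or.inl rfl)
    have hbj : (chainBottom P i, j) ∈ P :=
      (h ▸ chainBottom_eq_or_mem P j).resolve_left fun e => (e ▸ hbi).not_gt hij
    rcases chainBottom_eq_or_mem P i with hb | hb
    · rwa [hb] at hbj
    · exact (hup _ hb hbj hij.ne).resolve_right fun hji => (hP.1 hji).not_gt hij

theorem decomposesIntoChains_iff_isChain (hP : IsPoset P) :
    DecomposesIntoChains P ↔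
      (∀ k, IsChain (fun i j => (i, j) ∈ P) {i | (i, k) ∈ P}) ∧
        ∀ m, IsChain (fun i j => (i, j) ∈ P) {j | (m, j) ∈ P} :=
  ⟨fun hD => ⟨hD.isChain_lowerSet hP, hD.isChain_upperSet hP⟩,
    fun ⟨hlow, hup⟩ => decomposesIntoChains_of_isChain hP hlow hup⟩

end Poset

/-- `P^cov` is the highest cover set of `P` iff `P` decomposes into
chains. -/
theorem cov_eq_highest_iff_chains {n : ℕ} (P : Set (Fin n × Fin n)) (hP : IsPoset P) :
    (∃ S : Finset (Fin n × Fin n), IsHighestCoverSet P S ∧ ↑S = covers P) ↔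
      DecomposesIntoChains P := by
  rw [exists_isHighestCoverSet_coe_eq_covers_iff, injOn_fst_covers_iff_isChain hP,
    injOn_snd_covers_iff_isChain hP, decomposesIntoChains_iff_isChain hP, and_comm]
end

section
/- A poset Q on [n] is [[n]]-representative if and only if Q decomposes into chains. Here Q is [[n]]-representative means: (i) if (i,k) is in the highest cover set Q^cov_h and (i,j) ∈ Q^cov then (j,k) ∉ [[n]], and (ii) if (i,k) ∈ Q^cov_h and (j,k) ∈ Q^cov then (i,j) ∉ [[n]]. -/
/-!
Let `S` be a highest cover set of a `[[n]]`-representative poset `Q`. If a cover `(a, b)` were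
missing from `S`, representativity forces the elements of `S` in row `a` or column `b` to be
strictly shorter than `(a, b)`; exchanging them for `(a, b)` keeps the set independent and makes
its length sequence lexicographically larger, which is absurd. So every cover lies in the
independent set `S`: each element has at most one upper and one lower cover. Then any two
elements above (or below) a common element are comparable, comparability is an equivalence
relation, and its classes are the chains. Conversely, in a disjoint union of chains an element
strictly between the ends of a cover and related to one end would be related to the other.
-/

open scoped Classical

theorem lexGe_iff_toLex_le {f g : ℕ → ℕ} : lexGe f g ↔ toLex g ≤ toLex f := by
  rw [le_iff_lt_or_eq, lexGe, toLex_inj, eq_comm, or_comm]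
  exact or_congr_left ⟨fun ⟨m, hpre, hm⟩ => ⟨m, fun i hi => (hpre i hi).symm, hm⟩,
    fun ⟨m, hpre, hm⟩ => ⟨m, fun i hi => (hpre i hi).symm, hm⟩⟩

noncomputable def descSeq (M : Multiset ℕ) : ℕ → ℕ :=
  fun m => (M.sort (· ≤ ·)).reverse.getD m 0

theorem List.le_getD_iff_lt_countP {l : List ℕ} (hl : l.Pairwise (· ≥ ·)) {v : ℕ} (hv : 0 < v)
    (m : ℕ) : v ≤ l.getD m 0 ↔ m < l.countP (v ≤ ·) := by
  induction l generalizing m with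
  | nil => simp only [List.getD_nil, List.countP_nil]; omega
  | cons a l ih =>
    rw [List.pairwise_cons] at hl
    by_cases hva : v ≤ a
    · cases m with
      | zero => simp [hva]
      | succ m => rw [List.getD_cons_succ, ih hl.2 m]; simp [hva]
    · have hl0 : l.countP (v ≤ ·) = 0 :=
        List.countP_eq_zero.2 fun x hx => by
          simpa only [decide_eq_true_eq, not_le] using (hl.1 x hx).trans_lt (not_le.1 hva)
      cases m with
      | zero => simp [hva, hl0]
      | succ m => rw [List.getD_cons_succ, ih hl.2 m]; simp [hva, hl0]

theorem le_descSeq_iff {M : Multiset ℕ} {v : ℕ} (hv : 0 < v) (m : ℕ) :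
    v ≤ descSeq M m ↔ m < (M.filter (v ≤ ·)).card := by
  have hsorted : (M.sort (· ≤ ·)).reverse.Pairwise (· ≥ ·) :=
    List.pairwise_reverse.2 (M.pairwise_sort _)
  rw [descSeq, List.le_getD_iff_lt_countP hsorted hv, List.countP_reverse,
    ← Multiset.countP_eq_card_filter, ← Multiset.coe_countP, Multiset.sort_eq]

/-- The two sequences agree on their entries `≥ z`, after which the first drops below `z`. -/
theorem toLex_descSeq_add_lt_cons {R M : Multiset ℕ} {z : ℕ} (hz : 0 < z)
    (hR : ∀ r ∈ R, r < z) : toLex (descSeq (R + M)) < toLex (descSeq (z ::ₘ M)) := by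
  have hR' : ∀ v, z ≤ v → (R + M).filter (v ≤ ·) = M.filter (v ≤ ·) := fun v hv => by
    rw [Multiset.filter_add, Multiset.filter_eq_nil.2 fun r hr => by have := hR r hr; omega,
      zero_add]
  have hcons : ∀ v, z < v → (z ::ₘ M).filter (v ≤ ·) = M.filter (v ≤ ·) := fun v hv =>
    Multiset.filter_cons_of_neg _ (by omega)
  have hz' : ((z ::ₘ M).filter (z ≤ ·)).card = (M.filter (z ≤ ·)).card + 1 := by
    rw [Multiset.filter_cons_of_pos _ le_rfl, Multiset.card_cons]
  change ∃ m, (∀ i < m, descSeq (R + M) i = descSeq (z ::ₘ M) i) ∧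
    descSeq (R + M) m < descSeq (z ::ₘ M) m
  refine ⟨(M.filter (z ≤ ·)).card, fun i hi => eq_of_forall_le_iff fun v => ?_, ?_⟩
  · rcases Nat.eq_zero_or_pos v with rfl | hv
    · simp
    rw [le_descSeq_iff hv, le_descSeq_iff hv]
    rcases le_or_gt v z with hvz | hzv
    · have h1 := Multiset.card_le_card (Multiset.monotone_filter_right (R + M)
        (fun x (h : z ≤ x) => hvz.trans h))
      have h2 := Multiset.card_le_card (Multiset.monotone_filter_right (z ::ₘ M)
        (fun x (h : z ≤ x) => hvz.trans h))
      rw [hR' z le_rfl] at h1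
      rw [hz'] at h2
      omega
    · rw [hR' v hzv.le, hcons v hzv]
  · have h1 := (le_descSeq_iff (M := R + M) hz (M.filter (z ≤ ·)).card).not.2
      (by rw [hR' z le_rfl]; omega)
    have h2 := (le_descSeq_iff (M := z ::ₘ M) hz (M.filter (z ≤ ·)).card).2 (by omega)
    omega

section HighestCoverSet

variable {n : ℕ} {P : Set (Fin n × Fin n)} {S E : Finset (Fin n × Fin n)}

theorem lenSeq_eq_descSeq (S : Finset (Fin n × Fin n)) :
    lenSeq S = descSeq (S.val.map fun p => (p.2 : ℕ) - p.1) := rfl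

theorem exists_isHighestCoverSet (P : Set (Fin n × Fin n)) : ∃ S, IsHighestCoverSet P S := by
  obtain ⟨S, hS, hmax⟩ := (Finset.univ.filter fun S : Finset (Fin n × Fin n) =>
    ↑S ⊆ covers P ∧ Indep S).exists_max_image (fun S => toLex (lenSeq S))
    ⟨∅, by simp [Indep]⟩
  simp only [Finset.mem_filter, Finset.mem_univ, true_and] at hS hmax
  exact ⟨S, hS.1, hS.2, fun T hT hTind => lexGe_iff_toLex_le.2 (hmax T ⟨hT, hTind⟩)⟩

theorem Indep.eq_of_fst_eq (hS : Indep S) {p q : Fin n × Fin n} (hp : p ∈ S) (hq : q ∈ S)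
    (h : p.1 = q.1) : p = q :=
  by_contra fun hne => (hS p hp q hq hne).1 h

theorem Indep.eq_of_snd_eq (hS : Indep S) {p q : Fin n × Fin n} (hp : p ∈ S) (hq : q ∈ S)
    (h : p.2 = q.2) : p = q :=
  by_contra fun hne => (hS p hp q hq hne).2 h

theorem Indep.insert_sdiff (hS : Indep S) {q : Fin n × Fin n}
    (hE : ∀ p ∈ S, p.1 = q.1 ∨ p.2 = q.2 → p ∈ E) : Indep (insert q (S \ E)) := by
  have hq : ∀ p ∈ S \ E, p.1 ≠ q.1 ∧ p.2 ≠ q.2 := fun p hp => by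
    rw [Finset.mem_sdiff] at hp
    exact not_or.1 fun h => hp.2 (hE p hp.1 h)
  intro p hp r hr hne
  rw [Finset.mem_insert] at hp hr
  rcases hp with rfl | hp <;> rcases hr with rfl | hr
  · exact absurd rfl hne
  · exact (hq r hr).imp Ne.symm Ne.symm
  · exact hq p hp
  · exact hS p (Finset.sdiff_subset hp) r (Finset.sdiff_subset hr) hne

/-- The new set would have a lexicographically larger length sequence than `S`. -/
theorem IsHighestCoverSet.not_indep_insert_sdiff (hS : IsHighestCoverSet P S) (hE : E ⊆ S)
    {q : Fin n × Fin n} (hq : q ∈ covers P) (hqS : q ∉ S) (hq_lt : q.1 < q.2)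
    (hlen : ∀ p ∈ E, (p.2 : ℕ) - p.1 < (q.2 : ℕ) - q.1) :
    ¬ Indep (insert q (S \ E)) := by
  intro hind
  have hcov : ↑(insert q (S \ E)) ⊆ covers P := by
    rw [Finset.coe_insert]
    exact Set.insert_subset hq ((Finset.coe_subset.2 Finset.sdiff_subset).trans hS.1)
  have hge := lexGe_iff_toLex_le.1 (hS.2.2 _ hcov hind)
  refine hge.not_gt ?_
  have hqE : q ∉ S \ E := fun h => hqS (Finset.sdiff_subset h)
  rw [lenSeq_eq_descSeq, lenSeq_eq_descSeq, Finset.insert_val_of_notMem hqE, Multiset.map_cons,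
    ← add_tsub_cancel_of_le (Finset.val_le_iff.2 hE), Multiset.map_add, ← Finset.sdiff_val]
  exact toLex_descSeq_add_lt_cons (by omega) (Multiset.forall_mem_map_iff.2 hlen)

theorem IsHighestCoverSet.covers_subset (hP : P ⊆ PosUpper n) (hS : IsHighestCoverSet P S)
    (hup : ∀ p ∈ S, ∀ j, (p.1, j) ∈ covers P → ¬ j < p.2)
    (hdown : ∀ p ∈ S, ∀ j, (j, p.2) ∈ covers P → ¬ p.1 < j) : covers P ⊆ S := by
  intro q hq
  by_contra hqS
  have hq_lt : q.1 < q.2 := hP hq.1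
  refine hS.not_indep_insert_sdiff (Finset.filter_subset (fun p => p.1 = q.1 ∨ p.2 = q.2) S)
    hq hqS hq_lt ?_ (hS.2.1.insert_sdiff fun p hp h => Finset.mem_filter.2 ⟨hp, h⟩)
  intro p hp
  rw [Finset.mem_filter] at hp
  have hpq : p ≠ q := fun h => hqS (h ▸ hp.1)
  rcases hp with ⟨hpS, h1 | h2⟩
  · have hle := hup p hpS q.2 (by rwa [h1])
    have hne : p.2 ≠ q.2 := fun h2 => hpq (Prod.ext h1 h2)
    rw [h1]
    omega
  · have hle := hdown p hpS q.1 (by rwa [h2])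
    have hne : p.1 ≠ q.1 := fun h1 => hpq (Prod.ext h1 h2)
    rw [h2]
    omega

end HighestCoverSet

section Chains

variable {n : ℕ} {P : Set (Fin n × Fin n)}

theorem IsPoset.isStrictOrder (hP : IsPoset P) : IsStrictOrder (Fin n) fun a b => (a, b) ∈ P where
  irrefl a h := lt_irrefl a (hP.1 h)
  trans := hP.2

theorem covers_preimage_swap : covers (Prod.swap ⁻¹' P) = Prod.swap ⁻¹' covers P := by
  ext ⟨a, b⟩
  simp [covers, and_comm]

def Comparable (P : Set (Fin n × Fin n)) (i j : Fin n) : Prop :=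
  i = j ∨ (i, j) ∈ P ∨ (j, i) ∈ P

theorem Comparable.symm {i j : Fin n} (h : Comparable P i j) : Comparable P j i :=
  h.imp Eq.symm Or.symm

theorem comparable_preimage_swap {i j : Fin n} :
    Comparable (Prod.swap ⁻¹' P) i j ↔ Comparable P i j := by
  simp only [Comparable, Set.mem_preimage, Prod.swap_prod_mk, or_comm (a := (j, i) ∈ P)]

section StrictOrder

variable (hP : IsStrictOrder (Fin n) fun a b => (a, b) ∈ P)
include hP

theorem exists_mem_covers_of_mem {i j : Fin n} (hij : (i, j) ∈ P) :
    ∃ a, (i, a) ∈ covers P ∧ (a = j ∨ (a, j) ∈ P) := by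
  obtain ⟨a, ⟨hia, haj⟩, hmin⟩ :=
    (Finite.wellFounded_of_trans_of_irrefl fun a b => (a, b) ∈ P).has_min
      {a | (i, a) ∈ P ∧ (a = j ∨ (a, j) ∈ P)} ⟨j, hij, Or.inl rfl⟩
  refine ⟨a, ⟨hia, fun ⟨m, him, hma⟩ => hmin m ⟨him, Or.inr ?_⟩ hma⟩, haj⟩
  rcases haj with rfl | haj
  exacts [hma, trans_of (fun a b => (a, b) ∈ P) hma haj]

theorem comparable_of_mem_of_mem
    (hup : ∀ a b c, (a, b) ∈ covers P → (a, c) ∈ covers P → b = c) {i j k : Fin n}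
    (hij : (i, j) ∈ P) (hik : (i, k) ∈ P) : Comparable P j k := by
  have : IsStrictOrder (Fin n) fun a b => (b, a) ∈ P :=
    inferInstanceAs (IsStrictOrder _ (Function.swap _))
  induction i using (Finite.wellFounded_of_trans_of_irrefl fun a b => (b, a) ∈ P).induction
    generalizing j k with
  | _ i ih =>
    obtain ⟨a, hia, haj⟩ := exists_mem_covers_of_mem hP hij
    obtain ⟨b, hib, hbk⟩ := exists_mem_covers_of_mem hP hik
    obtain rfl := hup i a b hia hib
    rcases haj with rfl | haj <;> rcases hbk with rfl | hbk
    · exact Or.inl rfl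
    · exact Or.inr (Or.inl hbk)
    · exact Or.inr (Or.inr haj)
    · exact ih a hia.1 haj hbk

theorem comparable_of_mem_of_mem'
    (hdown : ∀ a b c, (a, c) ∈ covers P → (b, c) ∈ covers P → a = b) {i j k : Fin n}
    (hik : (i, k) ∈ P) (hjk : (j, k) ∈ P) : Comparable P i j := by
  have hP' : IsStrictOrder (Fin n) fun a b => (a, b) ∈ Prod.swap ⁻¹' P :=
    inferInstanceAs (IsStrictOrder _ (Function.swap fun a b => (a, b) ∈ P))
  rw [← comparable_preimage_swap]
  refine comparable_of_mem_of_mem hP' (fun a b c hb hc => ?_) hik hjk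
  rw [covers_preimage_swap] at hb hc
  exact hdown b c a hb hc

theorem Comparable.trans
    (hup : ∀ a b c, (a, b) ∈ covers P → (a, c) ∈ covers P → b = c)
    (hdown : ∀ a b c, (a, c) ∈ covers P → (b, c) ∈ covers P → a = b) {i j k : Fin n}
    (hij : Comparable P i j) (hjk : Comparable P j k) : Comparable P i k := by
  rcases hij with rfl | hij | hji
  · exact hjk
  rcases hjk with rfl | hjk | hkj
  · exact Or.inr (Or.inl hij)
  · exact Or.inr (Or.inl (trans_of (fun a b => (a, b) ∈ P) hij hjk))
  · exact comparable_of_mem_of_mem' hP hdown hij hkj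
  rcases hjk with rfl | hjk | hkj
  · exact Or.inr (Or.inr hji)
  · exact comparable_of_mem_of_mem hP hup hji hjk
  · exact Or.inr (Or.inr (trans_of (fun a b => (a, b) ∈ P) hkj hji))

end StrictOrder

theorem decomposesIntoChains_of_covers (hP : IsPoset P)
    (hup : ∀ a b c, (a, b) ∈ covers P → (a, c) ∈ covers P → b = c)
    (hdown : ∀ a b c, (a, c) ∈ covers P → (b, c) ∈ covers P → a = b) :
    DecomposesIntoChains P := by
  let s : Setoid (Fin n) := ⟨Comparable P, fun _ => Or.inl rfl, Comparable.symm,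
    Comparable.trans hP.isStrictOrder hup hdown⟩
  refine ⟨fun i => (Quotient.mk s i).out, fun i j hij => ?_⟩
  rw [Quotient.out_inj, Quotient.eq]
  refine ⟨fun h => Or.inr (Or.inl h), ?_⟩
  rintro (rfl | h | h)
  exacts [absurd hij (lt_irrefl i), h, absurd (hP.1 h) hij.asymm]

theorem DecomposesIntoChains.not_lt_of_mem_of_mem_covers (hc : DecomposesIntoChains P)
    (hP : P ⊆ PosUpper n) {i j k : Fin n} (hij : (i, j) ∈ P) (hik : (i, k) ∈ covers P) :
    ¬ j < k := by
  obtain ⟨c, hc⟩ := hc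
  intro hjk
  have hcj := (hc i j (hP hij)).1 hij
  have hck := (hc i k (hP hik.1)).1 hik.1
  exact hik.2 ⟨j, hij, (hc j k hjk).2 (hcj.symm.trans hck)⟩

theorem DecomposesIntoChains.not_lt_of_mem_covers_of_mem (hc : DecomposesIntoChains P)
    (hP : P ⊆ PosUpper n) {i j k : Fin n} (hik : (i, k) ∈ covers P) (hjk : (j, k) ∈ P) :
    ¬ i < j := by
  obtain ⟨c, hc⟩ := hc
  intro hij
  have hci := (hc i k (hP hik.1)).1 hik.1
  have hcj := (hc j k (hP hjk)).1 hjk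
  exact hik.2 ⟨j, (hc i j hij).2 (hci.trans hcj.symm), hjk⟩

end Chains

/-- A poset `Q` is `[[n]]`-representative iff it decomposes into
chains. -/
theorem nn_representative_iff_chains {n : ℕ} (Q : Set (Fin n × Fin n)) (hQ : IsPoset Q) :
    PRep (PosUpper n) Q ↔ DecomposesIntoChains Q := by
  constructor
  · rintro ⟨-, hrep⟩
    obtain ⟨S, hS⟩ := exists_isHighestCoverSet Q
    obtain ⟨hup, hdown⟩ := hrep S hS
    have hcov : covers Q ⊆ S := hS.covers_subset hQ.1 hup hdown
    exact decomposesIntoChains_of_covers hQ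
      (fun a b c hb hc => congrArg Prod.snd (hS.2.1.eq_of_fst_eq (hcov hb) (hcov hc) rfl))
      (fun a b c ha hb => congrArg Prod.fst (hS.2.1.eq_of_snd_eq (hcov ha) (hcov hb) rfl))
  · intro hc
    refine ⟨hQ.1, fun S hS => ⟨fun p hp j hj => ?_, fun p hp j hj => ?_⟩⟩
    · exact hc.not_lt_of_mem_of_mem_covers hQ.1 hj.1 (hS.1 hp)
    · exact hc.not_lt_of_mem_covers_of_mem hQ.1 (hS.1 hp) hj.1
end

section
/- Let P ⊆ [[n]] be a poset normal in [[n]], λ ∈ S*_P, and η ∈ n*_P with supp(η) ⊆ coaux_P(λ). Then supp(λ) is the highest cover set of the poset P^{(λ,η)} generated by the cover set supp(λ + η). -/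
open scoped Classical

/-- The poset generated by a cover set `S`: transitive closure of the relation `S`. -/
def posetOfCovers {n : ℕ} (S : Set (Fin n × Fin n)) : Set (Fin n × Fin n) :=
  {p | Relation.TransGen (fun a b : Fin n => (a, b) ∈ S) p.1 p.2}

/-- The support of a matrix, as a finset. -/
noncomputable def msuppF {n : ℕ} {F : Type*} [Field F] (X : Mat n F) :
    Finset (Fin n × Fin n) :=
  Finset.univ.filter fun p => X p.1 p.2 ≠ 0

/-! Every position of `supp η ⊆ coaux_P(λ)` is strictly shorter than the entry of `λ` in its row
or column that witnesses `coadj_{[[n]]}(λ)`; as `λ` has one entry per row and column, this makes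
`supp λ` and `supp η` disjoint. An entry `(i,k)` of `λ` stays a cover of `P^{(λ,η)}`: a path
`i → c → ⋯ → k` would start either with an entry of `λ` in row `i`, which must be `(i,k)` itself,
or with a position of `supp η` lying in `coadj^R_P(λ)`. Every cover of `P^{(λ,η)}` lies in
`supp(λ + η)`, so an independent set `T` of covers is compared with `supp λ` greedily: the longest
element of `T` either is outdone by an entry of `λ`, or belongs to `supp λ`, is longest there too,
and can be removed from both. -/

def posLength {n : ℕ} (p : Fin n × Fin n) : ℕ := (p.2 : ℕ) - (p.1 : ℕ)

lemma lexGe_zero (f : ℕ → ℕ) : lexGe f fun _ => 0 := by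
  by_cases h : ∃ m, f m ≠ 0
  · refine Or.inr ⟨Nat.find h, fun i hi => ?_, Nat.pos_of_ne_zero (Nat.find_spec h)⟩
    simpa using Nat.find_min h hi
  · push Not at h
    exact Or.inl (funext h)

lemma lexGe_of_lt_zero {f g : ℕ → ℕ} (h : g 0 < f 0) : lexGe f g :=
  Or.inr ⟨0, fun _ hi => absurd hi (Nat.not_lt_zero _), h⟩

lemma lexGe_of_tail {f g : ℕ → ℕ} (h0 : f 0 = g 0)
    (h : lexGe (fun m => f (m + 1)) (fun m => g (m + 1))) : lexGe f g := by
  rcases h with h | ⟨m, hlt, hs⟩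
  · refine Or.inl (funext fun m => ?_)
    cases m with
    | zero => exact h0
    | succ k => exact congrFun h k
  · refine Or.inr ⟨m + 1, fun i hi => ?_, hs⟩
    cases i with
    | zero => exact h0
    | succ j => exact hlt j (by omega)

lemma Multiset.reverse_sort_le (s : Multiset ℕ) :
    (s.sort (· ≤ ·)).reverse = s.sort (· ≥ ·) := by
  rw [List.Perm.eq_reverse_of_sortedLE_of_sortedGE (l₂ := s.sort (· ≥ ·)) ?_
    (Multiset.pairwise_sort s (· ≤ ·)).sortedLE (Multiset.pairwise_sort s (· ≥ ·)).sortedGE,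
    List.reverse_reverse]
  rw [← Multiset.coe_eq_coe, Multiset.sort_eq, Multiset.sort_eq]

section lenSeq

variable {n : ℕ} {T : Finset (Fin n × Fin n)} {t : Fin n × Fin n}

lemma lenSeq_empty : lenSeq (∅ : Finset (Fin n × Fin n)) = fun _ => 0 := by
  funext m
  simp [lenSeq]

lemma lenSeq_eq_cons_of_max (ht : t ∈ T) (hmax : ∀ q ∈ T, posLength q ≤ posLength t) (m : ℕ) :
    lenSeq T m = (posLength t :: ((T.erase t).val.map posLength).sort (· ≥ ·)).getD m 0 := by
  have hval : T.val = t ::ₘ (T.erase t).val := by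
    rw [Finset.erase_val, Multiset.cons_erase ht]
  rw [← Multiset.sort_cons]
  · simp only [lenSeq, Multiset.reverse_sort_le, hval, Multiset.map_cons]
    rfl
  · simp only [Multiset.mem_map, Finset.mem_val]
    rintro _ ⟨q, hq, rfl⟩
    exact hmax q (Finset.mem_of_mem_erase hq)

lemma lenSeq_zero_of_max (ht : t ∈ T) (hmax : ∀ q ∈ T, posLength q ≤ posLength t) :
    lenSeq T 0 = posLength t := by
  rw [lenSeq_eq_cons_of_max ht hmax]
  rfl

lemma lenSeq_succ_of_max (ht : t ∈ T) (hmax : ∀ q ∈ T, posLength q ≤ posLength t) (m : ℕ) :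
    lenSeq T (m + 1) = lenSeq (T.erase t) m := by
  rw [lenSeq_eq_cons_of_max ht hmax, lenSeq, Multiset.reverse_sort_le]
  rfl

lemma le_lenSeq_zero (ht : t ∈ T) : posLength t ≤ lenSeq T 0 := by
  obtain ⟨e, he, hmax⟩ := T.exists_max_image posLength ⟨t, ht⟩
  rw [lenSeq_zero_of_max he hmax]
  exact hmax t ht

end lenSeq

lemma Indep.subset {n : ℕ} {S T : Finset (Fin n × Fin n)} (hT : Indep T) (hST : S ⊆ T) :
    Indep S :=
  fun p hp q hq hpq => hT p (hST hp) q (hST hq) hpq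

theorem lexGe_lenSeq_of_forall_mem_or_exists_longer {n : ℕ} (T L : Finset (Fin n × Fin n))
    (hT : Indep T)
    (hdom : ∀ t ∈ T, t ∈ L ∨ ∃ e ∈ L, posLength t < posLength e ∧ (e.1 = t.1 ∨ e.2 = t.2)) :
    lexGe (lenSeq L) (lenSeq T) := by
  induction T using Finset.strongInduction generalizing L with
  | _ T ih =>
  rcases T.eq_empty_or_nonempty with rfl | hne
  · rw [lenSeq_empty]
    exact lexGe_zero _
  obtain ⟨t, ht, htmax⟩ := T.exists_max_image posLength hne
  by_cases hlonger : ∃ e ∈ L, posLength t < posLength e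
  · obtain ⟨e, he, hte⟩ := hlonger
    apply lexGe_of_lt_zero
    rw [lenSeq_zero_of_max ht htmax]
    exact hte.trans_le (le_lenSeq_zero he)
  push Not at hlonger
  have htL : t ∈ L := (hdom t ht).resolve_right fun ⟨e, he, hte, _⟩ => (hlonger e he).not_gt hte
  refine lexGe_of_tail (by rw [lenSeq_zero_of_max ht htmax, lenSeq_zero_of_max htL hlonger]) ?_
  simp only [lenSeq_succ_of_max ht htmax, lenSeq_succ_of_max htL hlonger]
  refine ih _ (Finset.erase_ssubset ht) _ (hT.subset (Finset.erase_subset t T)) fun s hs => ?_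
  obtain ⟨hst, hsT⟩ := Finset.mem_erase.mp hs
  refine (hdom s hsT).imp (fun hsL => Finset.mem_erase.mpr ⟨hst, hsL⟩) ?_
  rintro ⟨e, he, hse, hshare⟩
  refine ⟨e, Finset.mem_erase.mpr ⟨?_, he⟩, hse, hshare⟩
  rintro rfl
  obtain ⟨h1, h2⟩ := hT s hsT e ht hst
  exact hshare.elim h1.symm h2.symm

lemma Relation.TransGen.exists_head_of_trans {α : Type*} {r : α → α → Prop} {a b c : α}
    (hab : Relation.TransGen r a b) (hbc : Relation.TransGen r b c) :
    ∃ d, r a d ∧ Relation.TransGen r d c := by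
  obtain ⟨d, had, hdb⟩ := Relation.TransGen.head'_iff.mp hab
  exact ⟨d, had, Relation.TransGen.trans_right hdb hbc⟩

section posetOfCovers

variable {n : ℕ} {S P : Set (Fin n × Fin n)}

lemma covers_posetOfCovers_subset : covers (posetOfCovers S) ⊆ S := by
  rintro ⟨a, b⟩ ⟨hab, hcover⟩
  obtain ⟨c, hac, hcb⟩ := Relation.TransGen.head'_iff.mp hab
  rcases Relation.reflTransGen_iff_eq_or_transGen.mp hcb with rfl | hcb
  · exact hac
  · exact absurd ⟨c, Relation.TransGen.single hac, hcb⟩ hcover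

lemma posetOfCovers_subset (hP : IsPoset P) (hSP : S ⊆ P) : posetOfCovers S ⊆ P := by
  suffices ∀ a b, Relation.TransGen (fun a b => (a, b) ∈ S) a b → (a, b) ∈ P from
    fun p hp => this p.1 p.2 hp
  intro a b hab
  induction hab with
  | single h => exact hSP h
  | tail _ h ih => exact hP.2 _ _ _ ih (hSP h)

end posetOfCovers

section support

variable {n : ℕ} {F : Type*} [Field F]

@[simp]
lemma mem_msuppF {X : Mat n F} {p : Fin n × Fin n} : p ∈ msuppF X ↔ p ∈ msupp X := by
  simp [msuppF, msupp]

@[simp]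
lemma coe_msuppF (X : Mat n F) : (msuppF X : Set (Fin n × Fin n)) = msupp X :=
  Set.ext fun _ => mem_msuppF

lemma msupp_add_of_disjoint {X Y : Mat n F} (h : Disjoint (msupp X) (msupp Y)) :
    msupp (X + Y) = msupp X ∪ msupp Y := by
  ext p
  by_cases hX : X p.1 p.2 = 0
  · simp [msupp, hX]
  by_cases hY : Y p.1 p.2 = 0
  · simp [msupp, hY]
  exact (Set.disjoint_left.mp h hX hY).elim

lemma msupp_subset_of_mem_nPa {P : Set (Fin n × Fin n)} {X : Mat n F} (hX : X ∈ nPa P) :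
    msupp X ⊆ P :=
  fun p hp => by_contra fun hpP => hp (hX p.1 p.2 hpP)

variable {P : Set (Fin n × Fin n)} {lam : Mat n F}

lemma indep_msuppF_of_mem_SPa (hlam : lam ∈ SPa P) : Indep (msuppF lam) := by
  obtain ⟨-, hrow, hcol⟩ := hlam
  intro p hp q hq hpq
  rw [mem_msuppF] at hp hq
  refine ⟨fun h => hpq (Prod.ext h ?_), fun h => hpq (Prod.ext ?_ h)⟩
  · exact hrow p.1 p.2 q.2 hp (h ▸ hq)
  · exact hcol p.1 q.1 p.2 hp (h ▸ hq)

lemma coauxF_subset : coauxF P lam ⊆ P := by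
  rintro p ⟨hp | hp, -⟩ <;> exact hp.1

lemma exists_longer_of_mem_coadjF (hP : P ⊆ PosUpper n) {p : Fin n × Fin n}
    (hp : p ∈ coadjF P (PosUpper n) lam) :
    ∃ e ∈ msupp lam, posLength p < posLength e ∧ (e.1 = p.1 ∨ e.2 = p.2) := by
  have hlt : (p.1 : ℕ) < p.2 := hP (hp.elim (·.1) (·.1))
  rcases hp with ⟨-, i, hi, hip⟩ | ⟨-, k, hk, hpk⟩
  · have : (i : ℕ) < p.1 := hip
    exact ⟨_, hi, by simp only [posLength]; omega, Or.inr rfl⟩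
  · have : (p.2 : ℕ) < k := hpk
    exact ⟨_, hk, by simp only [posLength]; omega, Or.inl rfl⟩

lemma disjoint_msupp_coauxF (hP : P ⊆ PosUpper n) (hlam : lam ∈ SPa P) :
    Disjoint (msupp lam) (coauxF P lam) := by
  refine Set.disjoint_left.mpr fun p hp hpaux => ?_
  obtain ⟨e, he, hpe, hshare⟩ := exists_longer_of_mem_coadjF hP hpaux.1
  have : e = p := by
    rcases hshare with h | h
    · exact Prod.ext h (hlam.2.1 e.1 e.2 p.2 he (h ▸ hp))
    · exact Prod.ext (hlam.2.2 e.1 p.1 e.2 he (h ▸ hp)) h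
  exact (this ▸ hpe).false

lemma msupp_subset_covers (hP : IsPoset P) (hlam : lam ∈ SPa P) {E : Set (Fin n × Fin n)}
    (hE : E ⊆ coauxF P lam) : msupp lam ⊆ covers (posetOfCovers (msupp lam ∪ E)) := by
  have hQP : posetOfCovers (msupp lam ∪ E) ⊆ P :=
    posetOfCovers_subset hP (Set.union_subset (msupp_subset_of_mem_nPa hlam.1)
      (hE.trans coauxF_subset))
  rintro ⟨i, k⟩ hik
  refine ⟨Relation.TransGen.single (Or.inl hik), ?_⟩
  rintro ⟨j, hij, hjk⟩
  obtain ⟨c, hic, hck⟩ := hij.exists_head_of_trans hjk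
  have hckP : (c, k) ∈ P := hQP hck
  rcases hic with hic | hic
  · have hck_eq : c = k := hlam.2.1 i c k hic hik
    exact (hck_eq ▸ hP.1 hckP : c < c).false
  · exact (hE hic).2 (Or.inr ⟨hQP (Relation.TransGen.single (Or.inr hic)), k, hik, hckP⟩)

end support

theorem supp_is_highest_cover_set_general {n : ℕ} {F : Type*} [Field F]
    (P : Set (Fin n × Fin n)) (hP : IsPoset P)
    (lam : Mat n F) (hlam : lam ∈ SPa P)
    (eta : Mat n F) (heta : msupp eta ⊆ coauxF P lam) :
    IsHighestCoverSet (posetOfCovers (msupp (lam + eta))) (msuppF lam) := by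
  rw [msupp_add_of_disjoint ((disjoint_msupp_coauxF hP.1 hlam).mono_right heta)]
  refine ⟨by simpa using msupp_subset_covers hP hlam heta, indep_msuppF_of_mem_SPa hlam,
    fun T hT hTind => lexGe_lenSeq_of_forall_mem_or_exists_longer T _ hTind fun t ht => ?_⟩
  rcases covers_posetOfCovers_subset (hT ht) with htlam | hteta
  · exact Or.inl (by simpa using htlam)
  · obtain ⟨e, he, hte, hshare⟩ := exists_longer_of_mem_coadjF hP.1 (heta hteta).1
    exact Or.inr ⟨e, by simpa using he, hte, hshare⟩

/-- `supp(λ)` is the highest cover set of the poset `P^{(λ,η)}`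
generated by the cover set `supp(λ + η)`. -/
theorem supp_is_highest_cover_set {n : ℕ} {F : Type*} [Field F]
    (P : Set (Fin n × Fin n)) (hP : IsPoset P) (hN : NormalPoset P)
    (lam : Mat n F) (hlam : lam ∈ SPa P)
    (eta : Mat n F) (heta : msupp eta ⊆ coauxF P lam) :
    IsHighestCoverSet (posetOfCovers (msupp (lam + eta))) (msuppF lam) :=
  supp_is_highest_cover_set_general P hP lam hlam eta heta
end

section
/- Let P ⊆ [[n]] be a poset normal in [[n]] and λ ∈ S*_P with supp(λ) ⊆ P^cov. Then coaux_P(λ) ⊆ P^cov. Equivalently: if every supported position of λ is a cover of P, then every position of coadj_{[[n]]}(λ) \ coadj_P(λ) is also a cover of P. -/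
open scoped Classical

/-- If `supp(λ) ⊆ P^cov` then `coaux_P(λ) ⊆ P^cov`. -/
theorem coaux_subset_covers {n : ℕ} {F : Type*} [Field F]
    (P : Set (Fin n × Fin n)) (hP : IsPoset P) (hN : NormalPoset P)
    (lam : Mat n F) (hlam : lam ∈ SPa P) (hsupp : msupp lam ⊆ covers P) :
    coauxF P lam ⊆ covers P := by
  rintro ⟨j, k⟩ ⟨hmem, -⟩
  rcases hmem with ⟨hjkP, i, hik, hij⟩ | ⟨hjkP, l, hjl, hkl⟩
  · -- (i,k) ∈ supp λ, i < j, (j,k) ∈ P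
    refine ⟨hjkP, ?_⟩
    rintro ⟨m, hjm, hmk⟩
    obtain ⟨hikP, hikcov⟩ := hsupp hik
    have him : (i, m) ∉ P := fun h => hikcov ⟨m, h, hmk⟩
    have hjm' : (j, m) ∉ P :=
      hN i j m m (le_of_lt hij) (hP.1 hjm) (le_refl m) him
    exact hjm' hjm
  · -- (j,l) ∈ supp λ, k < l, (j,k) ∈ P
    refine ⟨hjkP, ?_⟩
    rintro ⟨m, hjm, hmk⟩
    obtain ⟨hjlP, hjlcov⟩ := hsupp hjl
    have hml : (m, l) ∉ P := fun h => hjlcov ⟨m, hjm, h⟩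
    have hmk' : (m, k) ∉ P :=
      hN m m k l (le_refl m) (hP.1 hmk) (le_of_lt hkl) hml
    exact hmk' hmk
end

section
/- Let P ⊆ [[n]] be a poset normal in [[n]] and λ ∈ S*_P. Let λ = α_1 + ... + α_k be the decomposition with each α_i supported on a single position of supp(λ). Then the map from U_P α_1 × ... × U_P α_k to U_P λ sending (ν_1, ..., ν_k) to ν_1 + ... + ν_k is a bijection, where U_P acts on the dual space n*_P by (gμ)(X) = μ(g^{-1}X). -/
open scoped Classical

/-- The left action of `g ∈ U_n` on the dual `n*_P` (identified with matrices
supported on `P`): `(gμ)(X) = μ(g⁻¹X)`, so `(gμ)_{jk} = Σ_a (g⁻¹)_{aj} μ_{ak}`. -/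
noncomputable def dActL {n : ℕ} {F : Type*} [Field F] (P : Set (Fin n × Fin n))
    (g mu : Mat n F) : Mat n F :=
  Matrix.of fun j k => if (j, k) ∈ P then ∑ a : Fin n, (g⁻¹) a j * mu a k else 0

/-- The right action of `g ∈ U_n` on the dual `n*_P`:
`(μg)(X) = μ(Xg⁻¹)`, so `(μg)_{ij} = Σ_b μ_{ib} (g⁻¹)_{jb}`. -/
noncomputable def dActR {n : ℕ} {F : Type*} [Field F] (P : Set (Fin n × Fin n))
    (g mu : Mat n F) : Mat n F :=
  Matrix.of fun i j => if (i, j) ∈ P then ∑ b : Fin n, mu i b * (g⁻¹) j b else 0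

section Aux
variable {n : ℕ} {F : Type*} [Field F] {P : Set (Fin n × Fin n)}

lemma aux_diag_not_mem (hsub : P ⊆ PosUpper n) (i : Fin n) : (i, i) ∉ P := by
  intro h
  exact lt_irrefl i (hsub h)

lemma aux_nPa_mul (hP : IsPoset P) {X Y : Mat n F} (hX : X ∈ nPa P) (hY : Y ∈ nPa P) :
    X * Y ∈ nPa P := by
  intro i j hij
  rw [Matrix.mul_apply]
  apply Finset.sum_eq_zero
  intro a _
  by_cases h1 : (i, a) ∈ P
  · by_cases h2 : (a, j) ∈ P
    · exact absurd (hP.2 i a j h1 h2) hij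
    · rw [hY a j h2, mul_zero]
  · rw [hX i a h1, zero_mul]

lemma aux_nPa_pow (hP : IsPoset P) {X : Mat n F} (hX : X ∈ nPa P) (m : ℕ) :
    X ^ (m + 1) ∈ nPa P := by
  induction m with
  | zero => simpa using hX
  | succ m ih => rw [pow_succ]; exact aux_nPa_mul hP ih hX

lemma aux_pow_bound (hsub : P ⊆ PosUpper n) {N : Mat n F} (hN : N ∈ nPa P) :
    ∀ m (i j : Fin n), (N ^ m) i j ≠ 0 → (i : ℕ) + m ≤ (j : ℕ) := by
  intro m
  induction m with
  | zero =>
    intro i j h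
    rw [pow_zero] at h
    by_cases hij : i = j
    · subst hij; simp
    · exact absurd (Matrix.one_apply_ne hij) h
  | succ m ih =>
    intro i j h
    rw [pow_succ, Matrix.mul_apply] at h
    obtain ⟨a, _, ha⟩ := Finset.exists_ne_zero_of_sum_ne_zero h
    have h1 : (N ^ m) i a ≠ 0 := left_ne_zero_of_mul ha
    have h2 : N a j ≠ 0 := right_ne_zero_of_mul ha
    have haj : (a, j) ∈ P := by by_contra hc; exact h2 (hN a j hc)
    have := hsub haj
    have := ih i a h1
    simp only [PosUpper, Set.mem_setOf_eq, Fin.lt_def] at *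
    omega

lemma aux_pow_n (hsub : P ⊆ PosUpper n) {N : Mat n F} (hN : N ∈ nPa P) :
    N ^ n = 0 := by
  ext i j
  by_contra h
  have := aux_pow_bound hsub hN n i j h
  have := j.isLt
  omega

lemma aux_UPg_triang (hsub : P ⊆ PosUpper n) {g : Mat n F} (hg : g ∈ UPg P) :
    g.BlockTriangular id := by
  intro i j hij
  have hne : i ≠ j := fun h => by subst h; exact lt_irrefl _ hij
  apply hg.2 i j hne
  intro hmem
  exact absurd (hsub hmem) (by simp [PosUpper]; exact le_of_lt hij)

lemma aux_UPg_det (hsub : P ⊆ PosUpper n) {g : Mat n F} (hg : g ∈ UPg P) :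
    g.det = 1 := by
  rw [Matrix.det_of_upperTriangular (aux_UPg_triang hsub hg)]
  simp [hg.1]

lemma aux_UPg_sub_one (hsub : P ⊆ PosUpper n) {g : Mat n F} (hg : g ∈ UPg P) :
    g - 1 ∈ nPa P := by
  intro i j hij
  by_cases h : i = j
  · subst h; simp [hg.1 i]
  · simp [Matrix.one_apply_ne h, hg.2 i j h hij]

lemma aux_UPg_mul_inv (hP : IsPoset P) {g : Mat n F} (hg : g ∈ UPg P) :
    g * (∑ m ∈ Finset.range n, (-(g - 1)) ^ m) = 1 ∧
    (∑ m ∈ Finset.range n, (-(g - 1)) ^ m) * g = 1 := by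
  set N := g - 1 with hNdef
  have hN : N ∈ nPa P := aux_UPg_sub_one hP.1 hg
  have hNn : (-N) ^ n = 0 := by
    rw [neg_pow, aux_pow_n hP.1 hN, mul_zero]
  have h1 : ((-N) - 1) * (∑ m ∈ Finset.range n, (-N) ^ m) = -1 := by
    rw [mul_geom_sum, hNn, zero_sub]
  have h2 : (∑ m ∈ Finset.range n, (-N) ^ m) * ((-N) - 1) = -1 := by
    rw [geom_sum_mul, hNn, zero_sub]
  have hg1 : g = -((-N) - 1) := by rw [hNdef]; abel
  constructor
  · rw [hg1, neg_mul, h1, neg_neg]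
  · rw [hg1, mul_neg, h2, neg_neg]

lemma aux_UPg_inv_eq (hP : IsPoset P) {g : Mat n F} (hg : g ∈ UPg P) :
    g⁻¹ = ∑ m ∈ Finset.range n, (-(g - 1)) ^ m :=
  Matrix.inv_eq_right_inv (aux_UPg_mul_inv hP hg).1

lemma aux_UPg_inv_mem (hP : IsPoset P) {g : Mat n F} (hg : g ∈ UPg P) :
    g⁻¹ ∈ UPg P := by
  rw [aux_UPg_inv_eq hP hg]
  set N := g - 1 with hNdef
  have hN : N ∈ nPa P := aux_UPg_sub_one hP.1 hg
  have hNneg : -N ∈ nPa P := fun i j hij => by simp [hN i j hij]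
  have hpow : ∀ m, 1 ≤ m → (-N) ^ m ∈ nPa P := by
    intro m hm
    obtain ⟨m', rfl⟩ := Nat.exists_eq_add_of_le hm
    rw [add_comm]
    exact aux_nPa_pow hP hNneg m'
  constructor
  · intro i
    rw [Matrix.sum_apply]
    rw [Finset.sum_eq_single 0]
    · simp
    · intro m _ hne
      exact hpow m (Nat.one_le_iff_ne_zero.2 hne) i i (aux_diag_not_mem hP.1 i)
    · intro h; exact absurd (Finset.mem_range.2 i.pos) h
  · intro i j hne hij
    rw [Matrix.sum_apply]
    apply Finset.sum_eq_zero
    intro m _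
    by_cases hm : m = 0
    · subst hm; simp [Matrix.one_apply_ne hne]
    · exact hpow m (Nat.one_le_iff_ne_zero.2 hm) i j hij

/-- Entry formula for the action on a single-position matrix. -/
lemma aux_dActL_single (p0 : Fin n × Fin n) {A : Mat n F}
    (hz : ∀ a b : Fin n, (a, b) ≠ p0 → A a b = 0) (g : Mat n F) (j k' : Fin n) :
    dActL P g A j k' = if (j, k') ∈ P then g⁻¹ p0.1 j * A p0.1 k' else 0 := by
  simp only [dActL, Matrix.of_apply]
  split
  · apply Finset.sum_eq_single p0.1
    · intro a _ ha
      rw [hz a k' (fun h => ha (congrArg Prod.fst h))]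
      exact mul_zero _
    · intro h; exact absurd (Finset.mem_univ _) h
  · rfl

lemma aux_dActL_col (p0 : Fin n × Fin n) {A : Mat n F}
    (hz : ∀ a b : Fin n, (a, b) ≠ p0 → A a b = 0) (g : Mat n F) (j k' : Fin n)
    (hk : k' ≠ p0.2) :
    dActL P g A j k' = 0 := by
  rw [aux_dActL_single p0 hz g j k']
  rw [hz p0.1 k' (fun h => hk (by rw [← h]))]
  simp

end Aux

/-- If `λ = α₁ + ⋯ + α_k` with each `α_i` supported on a single
position of `supp(λ)` (distinct positions), then summation gives a bijection
`U_P α₁ × ⋯ × U_P α_k → U_P λ` of left dual orbits. -/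
theorem dual_orbit_product_bijection {n : ℕ} {F : Type*} [Field F]
    (P : Set (Fin n × Fin n)) (hP : IsPoset P) (hN : NormalPoset P)
    (lam : Mat n F) (hlam : lam ∈ SPa P)
    (k : ℕ) (α : Fin k → Mat n F)
    (hsum : lam = ∑ i, α i)
    (hα : ∀ i, α i ∈ nPa P ∧ ∃ p ∈ msupp lam, msupp (α i) = {p})
    (hdisj : ∀ i j, i ≠ j → msupp (α i) ∩ msupp (α j) = ∅) :
    Set.BijOn (fun ν : Fin k → Mat n F => ∑ i, ν i)
      {ν | ∀ i, ν i ∈ {x : Mat n F | ∃ g ∈ UPg (F := F) P, x = dActL P g (α i)}}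
      {x : Mat n F | ∃ g ∈ UPg (F := F) P, x = dActL P g lam} := by
  classical
  choose p hp hsupp using fun s => (hα s).2
  have hαzero : ∀ s (a b : Fin n), (a, b) ≠ p s → α s a b = 0 := by
    intro s a b h
    by_contra hc
    have hmem : (a, b) ∈ msupp (α s) := hc
    rw [hsupp s] at hmem
    exact h hmem
  have hpne : ∀ s t, s ≠ t → p s ≠ p t := by
    intro s t hst he
    have h1 : p s ∈ msupp (α s) := by rw [hsupp s]; rfl
    have h2 : p s ∈ msupp (α t) := by rw [hsupp t]; exact he
    have h3 : p s ∈ msupp (α s) ∩ msupp (α t) := ⟨h1, h2⟩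
    rw [hdisj s t hst] at h3
    exact h3
  have hrow : ∀ s t, s ≠ t → (p s).1 ≠ (p t).1 := by
    intro s t hst he
    apply hpne s t hst
    have h2 : lam (p s).1 (p t).2 ≠ 0 := by rw [he]; exact hp t
    exact Prod.ext he (hlam.2.1 (p s).1 (p s).2 (p t).2 (hp s) h2)
  have hcolne : ∀ s t, s ≠ t → (p s).2 ≠ (p t).2 := by
    intro s t hst he
    apply hpne s t hst
    have h2 : lam (p t).1 (p s).2 ≠ 0 := by rw [he]; exact hp t
    exact Prod.ext (hlam.2.2 (p s).1 (p t).1 (p s).2 (hp s) h2) he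
  refine ⟨?_, ?_, ?_⟩
  · -- MapsTo
    intro ν hν
    simp only [Set.mem_setOf_eq] at hν ⊢
    choose g hg hgν using hν
    set G : Mat n F :=
      1 + ∑ s, Matrix.of (fun a b => if a = (p s).1 then ((g s)⁻¹ - 1) a b else 0)
      with hGdef
    have hginv : ∀ s, (g s)⁻¹ ∈ UPg P := fun s => aux_UPg_inv_mem hP (hg s)
    have hGrow : ∀ s b, G (p s).1 b = (g s)⁻¹ (p s).1 b := by
      intro s b
      rw [hGdef, Matrix.add_apply, Matrix.sum_apply]
      rw [Finset.sum_eq_single s]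
      · simp only [Matrix.of_apply, if_pos rfl, Matrix.sub_apply, if_true]
        simp [Matrix.one_apply, Matrix.neg_apply]
      · intro t _ hts
        simp only [Matrix.of_apply]
        exact if_neg (fun h => hrow t s hts h.symm)
      · intro h; exact absurd (Finset.mem_univ s) h
    have hGmem : G ∈ UPg P := by
      constructor
      · intro i
        rw [hGdef, Matrix.add_apply, Matrix.sum_apply, Matrix.one_apply_eq]
        rw [Finset.sum_eq_zero, add_zero]
        intro t _
        simp only [Matrix.of_apply, Matrix.sub_apply]
        split
        · rw [(hginv t).1 i, Matrix.one_apply_eq, sub_self]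
        · rfl
      · intro i j hne hij
        rw [hGdef, Matrix.add_apply, Matrix.sum_apply, Matrix.one_apply_ne hne]
        rw [Finset.sum_eq_zero, add_zero]
        intro t _
        simp only [Matrix.of_apply, Matrix.sub_apply]
        split
        · rw [(hginv t).2 i j hne hij, Matrix.one_apply_ne hne, sub_self]
        · rfl
    have hGdet : IsUnit G.det := by rw [aux_UPg_det hP.1 hGmem]; exact isUnit_one
    refine ⟨G⁻¹, aux_UPg_inv_mem hP hGmem, ?_⟩
    have hGi : (G⁻¹)⁻¹ = G := Matrix.nonsing_inv_nonsing_inv G hGdet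
    show (∑ s, ν s) = dActL P G⁻¹ lam
    ext j k'
    rw [Matrix.sum_apply]
    simp only [dActL, Matrix.of_apply, hGi]
    by_cases hjk : (j, k') ∈ P
    · rw [if_pos hjk]
      have hL : ∀ s, ν s j k' = (g s)⁻¹ (p s).1 j * α s (p s).1 k' := by
        intro s
        rw [hgν s, aux_dActL_single (p s) (hαzero s) (g s) j k', if_pos hjk]
      rw [Finset.sum_congr rfl (fun s _ => hL s)]
      have hR : ∀ a, G a j * lam a k' = ∑ s, G a j * α s a k' := by
        intro a
        rw [hsum, Matrix.sum_apply, Finset.mul_sum]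
      rw [Finset.sum_congr rfl (fun a _ => hR a), Finset.sum_comm]
      apply Finset.sum_congr rfl
      intro s _
      rw [Finset.sum_eq_single (p s).1]
      · rw [hGrow s j]
      · intro a _ ha
        rw [hαzero s a k' (fun h => ha (congrArg Prod.fst h))]
        exact mul_zero _
      · intro h; exact absurd (Finset.mem_univ _) h
    · rw [if_neg hjk]
      apply Finset.sum_eq_zero
      intro s _
      rw [hgν s, aux_dActL_single (p s) (hαzero s) (g s) j k', if_neg hjk]
  · -- InjOn
    intro ν hν ν' hν' heq
    simp only [Set.mem_setOf_eq] at hν hν'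
    choose g hg hgν using hν
    choose g' hg' hgν' using hν'
    have heq' : (∑ s, ν s) = ∑ s, ν' s := heq
    funext s
    ext j k'
    by_cases hk : k' = (p s).2
    · subst hk
      have key : ∀ (μ : Fin k → Mat n F) (gg : Fin k → Mat n F)
          (hμ : ∀ t, μ t = dActL P (gg t) (α t)),
          (∑ t, μ t) j (p s).2 = μ s j (p s).2 := by
        intro μ gg hμ
        rw [Matrix.sum_apply]
        apply Finset.sum_eq_single s
        · intro t _ hts
          rw [hμ t]
          exact aux_dActL_col (p t) (hαzero t) (gg t) j (p s).2 (hcolne s t (fun h => hts h.symm))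
        · intro h; exact absurd (Finset.mem_univ _) h
      have := key ν g hgν
      rw [← this, heq', key ν' g' hgν']
    · rw [hgν s, aux_dActL_col (p s) (hαzero s) (g s) j k' hk,
          hgν' s, aux_dActL_col (p s) (hαzero s) (g' s) j k' hk]
  · -- SurjOn
    intro x hx
    obtain ⟨g, hg, rfl⟩ := hx
    refine ⟨fun s => dActL P g (α s), fun s => ⟨g, hg, rfl⟩, ?_⟩
    show (∑ s, dActL P g (α s)) = dActL P g lam
    ext j k'
    rw [Matrix.sum_apply]
    simp only [dActL, Matrix.of_apply]
    by_cases hjk : (j, k') ∈ P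
    · simp only [if_pos hjk]
      rw [Finset.sum_comm]
      apply Finset.sum_congr rfl
      intro a _
      rw [hsum, Matrix.sum_apply, Finset.mul_sum]
    · simp [if_neg hjk]
end

section
/- Let P ⊆ [[n]] be a poset normal in [[n]], λ ∈ S*_P, and for g, h ∈ U_n set η = g^{-1}λ − λ and μ = λh^{-1} − λ (actions on the dual). Define (η *_λ μ)_{jk} = η_{jk} + μ_{jk} + Σ_{i<j<k<l, (i,l) ∈ supp(λ)} η_{jl} μ_{ik} (λ_{il})^{-1} for (j,k) ∈ P. Then η *_λ μ = g^{-1}λh^{-1} − λ. -/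
open scoped Classical

/-- The dual product `η *_λ μ` on `n*_P`. -/
noncomputable def dualStar {n : ℕ} {F : Type*} [Field F] (P : Set (Fin n × Fin n))
    (lam eta mu : Mat n F) : Mat n F :=
  Matrix.of fun j k =>
    if (j, k) ∈ P then
      eta j k + mu j k + ∑ i : Fin n, ∑ l : Fin n,
        if i < j ∧ j < k ∧ k < l ∧ lam i l ≠ 0 then eta j l * mu i k * (lam i l)⁻¹ else 0
    else 0

lemma UPg_inv_inv {n : ℕ} {F : Type*} [Field F] (g : Mat n F)
    (hg : g ∈ UPg (F := F) (PosUpper n)) : g⁻¹⁻¹ = g := by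
  apply Matrix.nonsing_inv_nonsing_inv
  have ht : g.BlockTriangular id := by
    intro i j hij
    exact hg.2 i j (ne_of_gt hij) (by simpa [PosUpper] using not_lt_of_gt hij)
  rw [Matrix.det_of_upperTriangular ht]
  simp [hg.1]

/-- If `η = g⁻¹λ − λ` and `μ = λh⁻¹ − λ` (dual actions), then
`η *_λ μ = g⁻¹λh⁻¹ − λ`. -/
theorem dualStar_eq {n : ℕ} {F : Type*} [Field F]
    (P : Set (Fin n × Fin n)) (hP : IsPoset P) (hN : NormalPoset P)
    (lam : Mat n F) (hlam : lam ∈ SPa P)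
    (g h : Mat n F) (hg : g ∈ UPg (F := F) (PosUpper n))
    (hh : h ∈ UPg (F := F) (PosUpper n))
    (eta mu : Mat n F)
    (heta : eta = dActL P g⁻¹ lam - lam) (hmu : mu = dActR P h⁻¹ lam - lam) :
    dualStar P lam eta mu = dActL P g⁻¹ (dActR P h⁻¹ lam) - lam := by
  obtain ⟨hPU, -⟩ := hP
  obtain ⟨hlamP, hrow, hcol⟩ := hlam
  have hgg : g⁻¹⁻¹ = g := UPg_inv_inv g hg
  have hhh : h⁻¹⁻¹ = h := UPg_inv_inv h hh
  subst heta hmu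
  ext j k
  by_cases hjk : (j, k) ∈ P
  · have hjk' : j < k := hPU hjk
    have hout : ∀ i l : Fin n, i ≤ j → k ≤ l → (i, l) ∈ P := by
      intro i l hij hkl
      by_contra hc
      exact hN i j k l hij hjk' hkl hc hjk
    simp only [dualStar, dActL, dActR, Matrix.sub_apply, Matrix.of_apply, hgg, hhh, hjk,
      if_true]
    have e1 : (∑ i : Fin n, ∑ l : Fin n,
          if i < j ∧ j < k ∧ k < l ∧ lam i l ≠ 0 then
            ((if (j, l) ∈ P then ∑ a : Fin n, g a j * lam a l else 0) - lam j l) *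
                ((if (i, k) ∈ P then ∑ b : Fin n, lam i b * h k b else 0) - lam i k) *
              (lam i l)⁻¹
          else 0)
        = ∑ i : Fin n, ∑ l : Fin n,
          if i < j ∧ j < k ∧ k < l ∧ lam i l ≠ 0 then g i j * (lam i l * h k l) else 0 := by
      refine Finset.sum_congr rfl fun i _ => Finset.sum_congr rfl fun l _ => ?_
      by_cases hc : i < j ∧ j < k ∧ k < l ∧ lam i l ≠ 0
      · rw [if_pos hc, if_pos hc]
        obtain ⟨hij, hjk2, hkl, hnz⟩ := hc
        have hjl : (j, l) ∈ P := hout j l le_rfl hkl.le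
        have hik : (i, k) ∈ P := hout i k hij.le le_rfl
        rw [if_pos hjl, if_pos hik]
        have e_eta : (∑ a : Fin n, g a j * lam a l) = g i j * lam i l := by
          apply Finset.sum_eq_single i
          · intro a _ ha
            rcases eq_or_ne (lam a l) 0 with h0 | h0
            · simp [h0]
            · exact absurd (hcol a i l h0 hnz) ha
          · simp
        have e_mu : (∑ b : Fin n, lam i b * h k b) = lam i l * h k l := by
          apply Finset.sum_eq_single l
          · intro b _ hb
            rcases eq_or_ne (lam i b) 0 with h0 | h0
            · simp [h0]
            · exact absurd (hrow i b l h0 hnz) hb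
          · simp
        have hlamjl : lam j l = 0 := by
          by_contra h0; exact hij.ne' (hcol j i l h0 hnz)
        have hlamik : lam i k = 0 := by
          by_contra h0; exact hkl.ne (hrow i k l h0 hnz)
        rw [e_eta, e_mu, hlamjl, hlamik, sub_zero, sub_zero]
        field_simp
      · rw [if_neg hc, if_neg hc]
    have e2 : (∑ a : Fin n, g a j * if (a, k) ∈ P then ∑ b : Fin n, lam a b * h k b else 0)
        = ∑ a : Fin n, ∑ b : Fin n, g a j * (lam a b * h k b) := by
      refine Finset.sum_congr rfl fun a _ => ?_
      split_ifs with hak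
      · rw [Finset.mul_sum]
      · rcases eq_or_ne a j with rfl | haj
        · exact absurd hjk hak
        · have hnlt : ¬ a < j := fun hlt => hak (hout a k hlt.le le_rfl)
          have hgz : g a j = 0 := hg.2 a j haj (by simpa [PosUpper] using hnlt)
          simp [hgz]
    have e3 : ∀ a b : Fin n, g a j * (lam a b * h k b) =
        (if a = j then lam j b * h k b else 0)
        + ((if b = k ∧ a ≠ j then g a j * lam a k else 0)
        + (if a < j ∧ j < k ∧ k < b ∧ lam a b ≠ 0 then g a j * (lam a b * h k b) else 0)) := by
      intro a b
      rcases eq_or_ne a j with rfl | haj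
      · simp [hg.1 a, lt_irrefl]
      · rcases eq_or_ne b k with rfl | hbk
        · simp [haj, hh.1 b, lt_irrefl]
        · simp only [haj, hbk, if_neg, ite_false, and_false, false_and, zero_add,
            if_neg (by simp [haj, hbk] : ¬(b = k ∧ ¬a = j))]
          split_ifs with hc
          · rfl
          · rcases eq_or_ne (lam a b) 0 with h0 | h0
            · simp [h0]
            · by_cases haj2 : a < j
              · by_cases hkb : k < b
                · exact absurd ⟨haj2, hjk', hkb, h0⟩ hc
                · have : h k b = 0 := hh.2 k b (Ne.symm hbk) (by simpa [PosUpper] using hkb)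
                  simp [this]
              · have : g a j = 0 := hg.2 a j haj (by simpa [PosUpper] using haj2)
                simp [this]
    have f1 : (∑ a : Fin n, ∑ b : Fin n, if a = j then lam j b * h k b else 0)
        = ∑ b : Fin n, lam j b * h k b := by
      simp
    have f2 : (∑ a : Fin n, ∑ b : Fin n, if b = k ∧ a ≠ j then g a j * lam a k else 0)
        = (∑ a : Fin n, g a j * lam a k) - lam j k := by
      have step : ∀ a : Fin n, (∑ b : Fin n, if b = k ∧ a ≠ j then g a j * lam a k else 0)
          = (if a = j then 0 else g a j * lam a k) := by
        intro a
        rcases eq_or_ne a j with rfl | haj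
        · simp
        · simp [haj]
      rw [Finset.sum_congr rfl fun a _ => step a]
      have : (∑ a : Fin n, (if a = j then 0 else g a j * lam a k))
            + (∑ a : Fin n, (if a = j then g a j * lam a k else 0))
          = ∑ a : Fin n, g a j * lam a k := by
        rw [← Finset.sum_add_distrib]
        refine Finset.sum_congr rfl fun a _ => ?_
        split_ifs <;> ring
      have h2 : (∑ a : Fin n, (if a = j then g a j * lam a k else 0)) = lam j k := by
        simp [hg.1 j]
      rw [h2] at this
      rw [eq_sub_iff_add_eq]
      exact this
    have e4 : (∑ a : Fin n, ∑ b : Fin n, g a j * (lam a b * h k b))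
        = (∑ b : Fin n, lam j b * h k b)
        + (((∑ a : Fin n, g a j * lam a k) - lam j k)
        + ∑ i : Fin n, ∑ l : Fin n,
            if i < j ∧ j < k ∧ k < l ∧ lam i l ≠ 0 then g i j * (lam i l * h k l) else 0) := by
      rw [Finset.sum_congr rfl fun a _ => Finset.sum_congr rfl fun b _ => e3 a b]
      simp only [Finset.sum_add_distrib]
      rw [f1, f2]
    rw [e1, e2, e4]
    ring
  · have h0 : lam j k = 0 := hlamP j k hjk
    simp [dualStar, dActL, dActR, hjk, h0]
end
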